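/- arXiv:1703.05118 — 4 statements merged into one kernel-verified Lean document; each statement's English description precedes it below -/
import Mathlib

section
/- For the Moser sequence w̃_n (as defined with parameter r > 0), the L² norms satisfy (log n)·∫_{ℝ²} w̃_n² dx → r²/4 as n → ∞. -/
/-! In polar coordinates `∫ w̃_n² = 2π ∫₀^r y w̃_n(y)² dy`. The profile is constant on `[0, r/n]`,
and on `[r/n, r]` the integrand `y log²(r/y)` has the explicit antiderivative
`y² (log²(r/y)/2 + log(r/y)/2 + 1/4)`; together they give the closed form
`log n · ∫ w̃_n² = r²/4 · (1 - (2 log n + 1)/n²)`. -/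

open Real MeasureTheory Filter Set Topology

noncomputable def moser (n : ℕ) (r : ℝ) (x : EuclideanSpace ℝ (Fin 2)) : ℝ :=
  if ‖x‖ ≤ r / n then Real.sqrt (Real.log n) / Real.sqrt (2 * Real.pi)
  else if ‖x‖ ≤ r then Real.log (r / ‖x‖) / (Real.sqrt (Real.log n) * Real.sqrt (2 * Real.pi))
  else 0

noncomputable def moserProfile (n : ℕ) (r y : ℝ) : ℝ :=
  if y ≤ r / n then √(log n) / √(2 * π)
  else if y ≤ r then log (r / y) / (√(log n) * √(2 * π))
  else 0

lemma moser_eq_moserProfile_norm (n : ℕ) (r : ℝ) (x : EuclideanSpace ℝ (Fin 2)) :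
    moser n r x = moserProfile n r ‖x‖ := rfl

lemma integral_comp_norm_euclideanSpace_fin_two (f : ℝ → ℝ) :
    ∫ x : EuclideanSpace ℝ (Fin 2), f ‖x‖ = 2 * π * ∫ y in Ioi 0, y * f y := by
  rw [integral_fun_norm_addHaar volume f, finrank_euclideanSpace_fin, measureReal_def,
    EuclideanSpace.volume_ball_fin_two]
  simp [smul_eq_mul, mul_assoc, pi_pos.le]

lemma hasDerivAt_log_div {r y : ℝ} (hr : r ≠ 0) (hy : y ≠ 0) :
    HasDerivAt (fun y => log (r / y)) (-y⁻¹) y := by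
  refine (((hasDerivAt_inv hy).const_mul r).log (by simp [hr, hy])).congr_deriv ?_
  field_simp

lemma continuousOn_mul_log_div_sq {a r : ℝ} (ha : 0 < a) (hr : r ≠ 0) :
    ContinuousOn (fun y => y * log (r / y) ^ 2) (Ici a) := by
  have hy : ∀ y ∈ Ici a, y ≠ 0 := fun y hy => (ha.trans_le hy).ne'
  exact continuousOn_id.mul <| (ContinuousOn.log (continuousOn_const.div continuousOn_id hy)
    fun y h => div_ne_zero hr (hy y h)).pow 2

lemma integral_Ioc_mul_log_div_sq {a r : ℝ} (ha : 0 < a) (har : a ≤ r) :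
    ∫ y in Ioc a r, y * log (r / y) ^ 2 =
      r ^ 2 / 4 - a ^ 2 * (log (r / a) ^ 2 / 2 + log (r / a) / 2 + 1 / 4) := by
  have hr : 0 < r := ha.trans_le har
  have hpos : ∀ y ∈ uIcc a r, 0 < y := fun y hy => ha.trans_le (uIcc_of_le har ▸ hy).1
  have hderiv : ∀ y ∈ uIcc a r, HasDerivAt
      (fun y => y ^ 2 * (log (r / y) ^ 2 / 2 + log (r / y) / 2 + 1 / 4))
      (y * log (r / y) ^ 2) y := by
    intro y hy
    have hlog := hasDerivAt_log_div hr.ne' (hpos y hy).ne'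
    refine ((hasDerivAt_pow 2 y).mul
      ((((hlog.pow 2).div_const 2).add (hlog.div_const 2)).add_const (1 / 4))).congr_deriv ?_
    simp only [Pi.add_apply, Pi.pow_apply]
    field_simp [(hpos y hy).ne']
    ring
  have hcont : ContinuousOn (fun y => y * log (r / y) ^ 2) (uIcc a r) :=
    (continuousOn_mul_log_div_sq ha hr.ne').mono (uIcc_of_le har ▸ Icc_subset_Ici_self)
  rw [← intervalIntegral.integral_of_le har,
    intervalIntegral.integral_eq_sub_of_hasDerivAt hderiv hcont.intervalIntegrable,
    div_self hr.ne', log_one]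
  ring

section moserProfile

variable {n : ℕ} {r y : ℝ}

lemma moserProfile_sq_of_le (h : y ≤ r / n) : moserProfile n r y ^ 2 = log n / (2 * π) := by
  rw [moserProfile, if_pos h, div_pow, sq_sqrt (log_natCast_nonneg n), sq_sqrt (by positivity)]

lemma moserProfile_sq_of_lt_of_le (h₁ : r / n < y) (h₂ : y ≤ r) :
    moserProfile n r y ^ 2 = log (r / y) ^ 2 / (log n * (2 * π)) := by
  rw [moserProfile, if_neg h₁.not_ge, if_pos h₂, div_pow, mul_pow,
    sq_sqrt (log_natCast_nonneg n), sq_sqrt (by positivity)]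

lemma moserProfile_of_lt (h₁ : r / n < y) (h₂ : r < y) : moserProfile n r y = 0 := by
  rw [moserProfile, if_neg h₁.not_ge, if_neg h₂.not_ge]

end moserProfile

lemma integral_Ioi_mul_moserProfile_sq {n : ℕ} {r : ℝ} (hn : 1 ≤ n) (hr : 0 < r) :
    ∫ y in Ioi 0, y * moserProfile n r y ^ 2 =
      log n / (2 * π) * ((r / n) ^ 2 / 2)
        + (r ^ 2 / 4 - (r / n) ^ 2 * (log n ^ 2 / 2 + log n / 2 + 1 / 4)) / (log n * (2 * π)) := by
  have hn₀ : (0 : ℝ) < n := by exact_mod_cast hn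
  have ha : 0 < r / n := div_pos hr hn₀
  have har : r / n ≤ r := div_le_self hr.le (by exact_mod_cast hn)
  have hinner : EqOn (fun y => y * moserProfile n r y ^ 2) (fun y => y * (log n / (2 * π)))
      (Ioc 0 (r / n)) := fun y hy => by simp only [moserProfile_sq_of_le hy.2]
  have hmiddle : EqOn (fun y => y * moserProfile n r y ^ 2)
      (fun y => y * log (r / y) ^ 2 * (log n * (2 * π))⁻¹) (Ioc (r / n) r) := fun y hy => by
    simp only [moserProfile_sq_of_lt_of_le hy.1 hy.2, div_eq_mul_inv, mul_assoc]
  have houter : EqOn (fun y => y * moserProfile n r y ^ 2) (fun _ => 0) (Ioi r) := fun y hy => by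
    simp [moserProfile_of_lt (har.trans_lt hy) hy]
  have hint_inner : IntegrableOn (fun y => y * moserProfile n r y ^ 2) (Ioc 0 (r / n)) :=
    (integrableOn_congr_fun hinner measurableSet_Ioc).2
      (continuous_id.mul continuous_const).integrableOn_Ioc
  have hint_middle : IntegrableOn (fun y => y * moserProfile n r y ^ 2) (Ioc (r / n) r) := by
    refine (integrableOn_congr_fun hmiddle measurableSet_Ioc).2 (Integrable.mul_const ?_ _)
    exact (((continuousOn_mul_log_div_sq ha hr.ne').mono Icc_subset_Ici_self).integrableOn_Icc
      ).mono_set Ioc_subset_Icc_self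
  have hint_outer : IntegrableOn (fun y => y * moserProfile n r y ^ 2) (Ioi r) :=
    (integrableOn_congr_fun houter measurableSet_Ioi).2 integrableOn_zero
  have hint_disk : IntegrableOn (fun y => y * moserProfile n r y ^ 2) (Ioc 0 r) :=
    Ioc_union_Ioc_eq_Ioc ha.le har ▸ hint_inner.union hint_middle
  rw [← Ioc_union_Ioi_eq_Ioi hr.le,
    setIntegral_union Ioc_disjoint_Ioi_same measurableSet_Ioi hint_disk hint_outer,
    ← Ioc_union_Ioc_eq_Ioc ha.le har,
    setIntegral_union (Ioc_disjoint_Ioc_of_le le_rfl) measurableSet_Ioc hint_inner hint_middle,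
    setIntegral_congr_fun measurableSet_Ioc hinner, setIntegral_congr_fun measurableSet_Ioc hmiddle,
    setIntegral_congr_fun measurableSet_Ioi houter, integral_mul_const, integral_mul_const,
    ← intervalIntegral.integral_of_le ha.le, integral_id, integral_Ioc_mul_log_div_sq ha har,
    div_div_cancel₀ hr.ne', integral_zero]
  ring

lemma log_mul_integral_moser_sq {n : ℕ} {r : ℝ} (hn : 2 ≤ n) (hr : 0 < r) :
    log n * ∫ x : EuclideanSpace ℝ (Fin 2), moser n r x ^ 2 =
      r ^ 2 / 4 * (1 - (2 * log n + 1) / n ^ 2) := by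
  have hlog : log n ≠ 0 := (log_pos (by exact_mod_cast hn)).ne'
  have hn₀ : (n : ℝ) ≠ 0 := by positivity
  simp only [moser_eq_moserProfile_norm]
  rw [integral_comp_norm_euclideanSpace_fin_two (fun y => moserProfile n r y ^ 2),
    integral_Ioi_mul_moserProfile_sq (by omega) hr]
  field_simp
  ring

lemma tendsto_two_mul_log_add_one_div_sq :
    Tendsto (fun n : ℕ => (2 * log n + 1) / (n : ℝ) ^ 2) atTop (𝓝 0) := by
  have hlog : Tendsto (fun x : ℝ => log x / x) atTop (𝓝 0) := by
    simpa using tendsto_pow_log_div_mul_add_atTop 1 0 1 one_ne_zero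
  have hinv : Tendsto (fun x : ℝ => x⁻¹) atTop (𝓝 0) := tendsto_inv_atTop_zero
  have h : Tendsto (fun x : ℝ => (2 * (log x / x) + x⁻¹) * x⁻¹) atTop (𝓝 0) := by
    simpa using ((hlog.const_mul 2).add hinv).mul hinv
  refine (h.comp tendsto_natCast_atTop_atTop).congr' ?_
  filter_upwards [eventually_ne_atTop 0] with n hn
  have hn₀ : (n : ℝ) ≠ 0 := Nat.cast_ne_zero.2 hn
  simp only [Function.comp_apply]
  field_simp

/-- `(log n) · ∫ w̃_n² → r²/4` as `n → ∞`. -/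
theorem moser_L2_asymptotics (r : ℝ) (hr : 0 < r) :
    Tendsto (fun n : ℕ =>
        Real.log n * ∫ x : EuclideanSpace ℝ (Fin 2), (moser n r x) ^ 2)
      atTop (nhds (r ^ 2 / 4)) := by
  have h := ((tendsto_const_nhds (x := (1 : ℝ))).sub
    tendsto_two_mul_log_add_one_div_sq).const_mul (r ^ 2 / 4)
  rw [sub_zero, mul_one] at h
  refine h.congr' ?_
  filter_upwards [eventually_ge_atTop 2] with n hn
  exact (log_mul_integral_moser_sq hn hr).symm
end

section
/- Let N ≥ 3 and let M : [0, ∞) → ℝ be continuous with inf_{t ≥ 0} M(t) = m₀ > 0 and lim_{t→∞} M(t)/t^{2/(N−2)} = 0. Then for every c > 0 there exists t > 0 such that t² = M(t^{N−2}·c). -/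
/-!
With `s = t ^ (N - 2) * c` one has `s ^ (2 / (N - 2)) = t ^ 2 * c ^ (2 / (N - 2))`, so the growth
condition on `M` says that `t ↦ M (t ^ (N - 2) * c)` is `o(t ^ 2)` as `t → ∞`. Hence
`t ^ 2 - M (t ^ (N - 2) * c)` is eventually nonnegative, while it is nonpositive at `t = √m₀`
because `M ≥ m₀`; the intermediate value theorem on `(0, ∞)` gives the root.
-/

open Real Set Filter Asymptotics

lemma pow_mul_rpow_two_div {k : ℕ} (hk : k ≠ 0) {t c : ℝ} (ht : 0 ≤ t) (hc : 0 ≤ c) :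
    (t ^ k * c) ^ ((2 : ℝ) / k) = t ^ 2 * c ^ ((2 : ℝ) / k) := by
  rw [mul_rpow (by positivity) hc, ← rpow_natCast t k, ← rpow_mul ht,
    mul_div_cancel₀ _ (Nat.cast_ne_zero.mpr hk), rpow_two]

lemma isLittleO_sq_comp_pow_mul {M : ℝ → ℝ} {k : ℕ} (hk : k ≠ 0) {c : ℝ} (hc : 0 < c)
    (hM : Tendsto (fun s => M s / s ^ ((2 : ℝ) / k)) atTop (nhds 0)) :
    (fun t => M (t ^ k * c)) =o[atTop] fun t => t ^ 2 := by
  have hMo : M =o[atTop] fun s => s ^ ((2 : ℝ) / k) := by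
    refine (isLittleO_iff_tendsto' ?_).mpr hM
    filter_upwards [eventually_gt_atTop 0] with s hs hs0
    exact absurd hs0 (rpow_pos_of_pos hs _).ne'
  have hscale : Tendsto (fun t : ℝ => t ^ k * c) atTop atTop :=
    (tendsto_pow_atTop hk).atTop_mul_const hc
  have hrescaled : (fun t => (t ^ k * c) ^ ((2 : ℝ) / k)) =ᶠ[atTop]
      fun t => c ^ ((2 : ℝ) / k) * t ^ 2 := by
    filter_upwards [eventually_ge_atTop 0] with t ht
    rw [pow_mul_rpow_two_div hk ht hc.le, mul_comm]
  exact (hMo.comp_tendsto hscale).trans_isBigO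
    (hrescaled.trans_isBigO (isBigO_const_mul_self _ _ _))

lemma exists_pos_sq_eq_of_isLittleO {h : ℝ → ℝ} (hh : ContinuousOn h (Ioi 0)) {m : ℝ}
    (hm : 0 < m) (hlb : ∀ t > 0, m ≤ h t) (hlo : h =o[atTop] fun t => t ^ 2) :
    ∃ t > 0, t ^ 2 = h t := by
  have hsmall : √m ^ 2 ≤ h √m := (sq_sqrt hm.le).trans_le (hlb _ (sqrt_pos.mpr hm))
  have hlarge : h ≤ᶠ[atTop] fun t => t ^ 2 := by
    filter_upwards [hlo.eventuallyLE] with t ht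
    simpa [abs_of_nonneg (sq_nonneg t)] using (le_abs_self (h t)).trans ht
  exact isPreconnected_Ioi.intermediate_value₂_eventually₁ (sqrt_pos.mpr hm)
    (le_principal_iff.mpr (Ioi_mem_atTop 0)) (continuousOn_pow 2) hh hsmall hlarge

theorem exists_rescaling_parameter (N : ℕ) (hN : 3 ≤ N) (M : ℝ → ℝ)
    (hM : Continuous M) (m₀ : ℝ) (hm₀ : 0 < m₀)
    (hinf : IsGLB (M '' (Ici 0)) m₀)
    (hlim : Tendsto (fun t => M t / t ^ ((2 : ℝ) / ((N : ℝ) - 2))) atTop (nhds 0)) :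
    ∀ c > 0, ∃ t > 0, t ^ 2 = M (t ^ (N - 2) * c) := by
  intro c hc
  have hk : N - 2 ≠ 0 := by omega
  have hcast : ((N - 2 : ℕ) : ℝ) = (N : ℝ) - 2 := by push_cast [show 2 ≤ N by omega]; ring
  rw [← hcast] at hlim
  refine exists_pos_sq_eq_of_isLittleO (by fun_prop) hm₀ (fun t ht => ?_)
    (isLittleO_sq_comp_pow_mul hk hc hlim)
  exact hinf.1 (mem_image_of_mem M (mem_Ici.mpr (by positivity)))
end

section
/- Let N ≥ 1, m > 0, let F : ℝ → ℝ be continuous with F(0) = 0 and lim_{s→0} F(s)/s² = 0, and let U : ℝ^N → ℝ be continuous, not identically zero, with U(x) → 0 as |x| → ∞ and ∫_{ℝ^N} (F(U(x)) − (m/2)U(x)²) dx ≥ 0 (with the integrand integrable). Then there exists x₀ ∈ ℝ^N with F(U(x₀)) > (m/2)·U(x₀)². -/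
/-! If `F (U x) ≤ m / 2 * U x ^ 2` everywhere, the continuous nonnegative function
`m / 2 * U ^ 2 - F ∘ U` has nonpositive integral, so it vanishes identically: `F t = m / 2 * t ^ 2`
on the range of `U`. That range is an interval containing a nonzero value and accumulating at `0`
(as `U` decays at infinity), so it contains nonzero values arbitrarily close to `0`, where
`F t / t ^ 2 = m / 2` contradicts `F t / t ^ 2 → 0`. -/

open Real MeasureTheory Filter Set Topology

theorem Continuous.eq_zero_of_nonneg_of_integral_nonpos {X : Type*} [TopologicalSpace X]
    [MeasurableSpace X] [OpensMeasurableSpace X] {μ : Measure X} [μ.IsOpenPosMeasure]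
    {f : X → ℝ} (hf : Continuous f) (hf0 : 0 ≤ f) (hfi : Integrable f μ)
    (hint : ∫ x, f x ∂μ ≤ 0) : f = 0 := by
  have hae : f =ᵐ[μ] 0 :=
    (integral_eq_zero_iff_of_nonneg hf0 hfi).1 (le_antisymm hint (integral_nonneg hf0))
  exact (hf.ae_eq_iff_eq μ continuous_zero).1 hae

theorem zero_mem_closure_range_diff_zero {X : Type*} [TopologicalSpace X] [PreconnectedSpace X]
    {U : X → ℝ} (hU : Continuous U) {l : Filter X} [l.NeBot] (hlim : Tendsto U l (𝓝 0))
    {x : X} (hx : U x ≠ 0) : (0 : ℝ) ∈ closure (range U \ {0}) := by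
  by_cases h0 : (0 : ℝ) ∈ range U
  · have hsub : uIoo 0 (U x) ⊆ range U \ {0} := fun t ht =>
      ⟨(isPreconnected_range hU).ordConnected.uIcc_subset h0 (mem_range_self x)
          (uIoo_subset_uIcc_self ht),
        fun ht0 => left_notMem_uIoo (ht0 ▸ ht)⟩
    apply closure_mono hsub
    rw [closure_uIoo hx.symm]
    exact left_mem_uIcc
  · rw [sdiff_singleton_eq_self h0]
    exact mem_closure_of_tendsto hlim (Eventually.of_forall mem_range_self)

theorem eq_zero_of_forall_eq_mul_sq {G : ℝ → ℝ}
    (hG : Tendsto (fun s => G s / s ^ 2) (𝓝[≠] 0) (𝓝 0)) {S : Set ℝ}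
    (hS : (0 : ℝ) ∈ closure (S \ {0})) {c : ℝ} (hGS : ∀ t ∈ S, G t = c * t ^ 2) : c = 0 := by
  have := mem_closure_iff_nhdsWithin_neBot.1 hS
  have hc : Tendsto (fun s => G s / s ^ 2) (𝓝[S \ {0}] 0) (𝓝 c) :=
    tendsto_const_nhds.congr' <| eventually_nhdsWithin_of_forall fun t ht => by
      dsimp only
      rw [hGS t ht.1, mul_div_cancel_right₀ _ (pow_ne_zero 2 ht.2)]
  exact tendsto_nhds_unique hc (hG.mono_left (nhdsWithin_mono _ (sdiff_subset_compl S {0})))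

theorem exists_point_F_above_general (N : ℕ) (hN : 1 ≤ N) (m : ℝ) (hm : 0 < m)
    (F : ℝ → ℝ) (hF : Continuous F)
    (hlim : Tendsto (fun s : ℝ => F s / s ^ 2) (nhdsWithin 0 {(0:ℝ)}ᶜ) (nhds 0))
    (U : EuclideanSpace ℝ (Fin N) → ℝ) (hU : Continuous U)
    (hUne : ∃ x, U x ≠ 0)
    (hdecay : Tendsto U (Filter.cocompact (EuclideanSpace ℝ (Fin N))) (nhds 0))
    (hint : Integrable (fun x => F (U x) - m / 2 * U x ^ 2))
    (hge : 0 ≤ ∫ x : EuclideanSpace ℝ (Fin N), (F (U x) - m / 2 * U x ^ 2)) :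
    ∃ x₀ : EuclideanSpace ℝ (Fin N), m / 2 * U x₀ ^ 2 < F (U x₀) := by
  -- makes the space noncompact, so that `cocompact` is a nontrivial filter
  have : Nonempty (Fin N) := ⟨⟨0, hN⟩⟩
  by_contra! hle
  have hgap_int : ∫ x : EuclideanSpace ℝ (Fin N), (m / 2 * U x ^ 2 - F (U x)) ≤ 0 := by
    simp only [← neg_sub (F _), integral_neg]
    linarith
  have hgap : (fun x => m / 2 * U x ^ 2 - F (U x)) = 0 :=
    Continuous.eq_zero_of_nonneg_of_integral_nonpos (by fun_prop) (fun x => sub_nonneg.2 (hle x))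
      (by simpa only [Pi.neg_def, neg_sub] using hint.neg) hgap_int
  have hFU : ∀ t ∈ range U, F t = m / 2 * t ^ 2 := by
    rintro _ ⟨x, rfl⟩
    exact (sub_eq_zero.1 (congrFun hgap x)).symm
  obtain ⟨x, hx⟩ := hUne
  exact (half_pos hm).ne'
    (eq_zero_of_forall_eq_mul_sq hlim (zero_mem_closure_range_diff_zero hU hdecay hx) hFU)

theorem exists_point_F_above (N : ℕ) (hN : 1 ≤ N) (m : ℝ) (hm : 0 < m)
    (F : ℝ → ℝ) (hF : Continuous F) (hF0 : F 0 = 0)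
    (hlim : Tendsto (fun s : ℝ => F s / s ^ 2) (nhdsWithin 0 {(0:ℝ)}ᶜ) (nhds 0))
    (U : EuclideanSpace ℝ (Fin N) → ℝ) (hU : Continuous U)
    (hUne : ∃ x, U x ≠ 0)
    (hdecay : Tendsto U (Filter.cocompact (EuclideanSpace ℝ (Fin N))) (nhds 0))
    (hint : Integrable (fun x => F (U x) - m / 2 * U x ^ 2))
    (hge : 0 ≤ ∫ x : EuclideanSpace ℝ (Fin N), (F (U x) - m / 2 * U x ^ 2)) :
    ∃ x₀ : EuclideanSpace ℝ (Fin N), m / 2 * U x₀ ^ 2 < F (U x₀) :=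
  exists_point_F_above_general N hN m hm F hF hlim U hU hUne hdecay hint hge
end

section
/- Let (t_n) be a sequence of reals with t_n ≥ 1 for all n, and suppose there exist constants C > 0 and d ≥ 0 such that for all sufficiently large n: t_n² ≥ C·exp(2 t_n²(log n − d) − 2 log n). Then (t_n) is bounded and lim_{n→∞} t_n = 1. -/
/-!
Since `exp y ≥ 1 + y`, the hypothesis linearizes to `t_n² (log n - c) < log n` with
`c = d + 1 / (2C)`, so `1 ≤ t_n ≤ t_n² < log n / (log n - c) → 1`.
-/

open Real Filter Topology

lemma lt_div_of_mul_exp_le {C d L x : ℝ} (hC : 0 < C) (hL : d + (2 * C)⁻¹ < L)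
    (h : C * exp (2 * x * (L - d) - 2 * L) ≤ x) : x < L / (L - (d + (2 * C)⁻¹)) := by
  have hlin : C * (2 * x * (L - d) - 2 * L + 1) ≤ x :=
    (mul_le_mul_of_nonneg_left (add_one_le_exp _) hC.le).trans h
  have hscaled : 2 * C * (x * (L - (d + (2 * C)⁻¹))) < 2 * C * L := by
    have hexpand : 2 * C * (x * (L - (d + (2 * C)⁻¹))) = 2 * C * x * (L - d) - x := by
      field_simp
      ring
    linarith
  rw [lt_div_iff₀ (sub_pos.mpr hL)]
  exact lt_of_mul_lt_mul_left hscaled (by positivity)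

lemma tendsto_div_self_sub_const {α : Type*} {l : Filter α} {f : α → ℝ}
    (hf : Tendsto f l atTop) (c : ℝ) : Tendsto (fun a => f a / (f a - c)) l (𝓝 1) := by
  have hsub : Tendsto (fun a => f a - c) l atTop := tendsto_atTop_add_const_right l (-c) hf
  have hsmall : Tendsto (fun a => 1 + c / (f a - c)) l (𝓝 1) := by
    simpa using (tendsto_const_nhds (x := c).div_atTop hsub).const_add 1
  refine hsmall.congr' ?_
  filter_upwards [hsub.eventually_gt_atTop 0] with a ha
  field_simp
  ring

theorem tn_tendsto_one_general (t : ℕ → ℝ) (ht : ∀ n, 1 ≤ t n) (C d : ℝ) (hC : 0 < C)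
    (h : ∀ᶠ n : ℕ in atTop,
      C * Real.exp (2 * (t n) ^ 2 * (Real.log n - d) - 2 * Real.log n) ≤ (t n) ^ 2) :
    (∃ B : ℝ, ∀ n, t n ≤ B) ∧ Tendsto t atTop (nhds 1) := by
  set c := d + (2 * C)⁻¹
  have hlog : Tendsto (fun n : ℕ => log n) atTop atTop :=
    tendsto_log_atTop.comp tendsto_natCast_atTop_atTop
  have hbound : ∀ᶠ n : ℕ in atTop, t n ≤ log n / (log n - c) := by
    filter_upwards [h, hlog.eventually_gt_atTop c] with n hn hc
    calc t n ≤ t n ^ 2 := le_self_pow₀ (ht n) two_ne_zero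
      _ ≤ log n / (log n - c) := (lt_div_of_mul_exp_le hC hc hn).le
  have hlim : Tendsto t atTop (𝓝 1) :=
    tendsto_of_tendsto_of_tendsto_of_le_of_le' tendsto_const_nhds
      (tendsto_div_self_sub_const hlog c) (.of_forall ht) hbound
  obtain ⟨B, hB⟩ := hlim.bddAbove_range
  exact ⟨⟨B, fun n => hB ⟨n, rfl⟩⟩, hlim⟩

theorem tn_tendsto_one (t : ℕ → ℝ) (ht : ∀ n, 1 ≤ t n) (C d : ℝ) (hC : 0 < C)
    (hd : 0 ≤ d)
    (h : ∀ᶠ n : ℕ in atTop,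
      C * Real.exp (2 * (t n) ^ 2 * (Real.log n - d) - 2 * Real.log n) ≤ (t n) ^ 2) :
    (∃ B : ℝ, ∀ n, t n ≤ B) ∧ Tendsto t atTop (nhds 1) :=
  tn_tendsto_one_general t ht C d hC h
end
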